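/- arXiv:2405.14123 — 2 statements merged into one kernel-verified Lean document; each statement's English description precedes it below -/
import Mathlib

section
/- If c ∈ ℂ^{ℤ_d×ℤ_d} and v ∈ ℂ^d satisfy Tc = vv*, and the entry v_0 ≠ 0, then v = (1/(d·conj(v_0)))·c̄·𝟙, where c̄ is the entrywise complex conjugate of the matrix c and 𝟙 ∈ ℂ^d is the all-ones vector; equivalently, d·conj(v_0)·v_j = Σ_{k∈ℤ_d} conj(c_{jk}) for each j ∈ ℤ_d. -/
open Matrix Complex

/-- `ω = exp(2πi/d)`, a primitive `d`-th root of unity. -/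
noncomputable def omegaRoot (d : ℕ) : ℂ := Complex.exp (2 * Real.pi * Complex.I / d)

/-- The cyclic shift matrix `S`, `S_{jk} = δ_{j,k+1}`. -/
def Smat (d : ℕ) [NeZero d] : Matrix (ZMod d) (ZMod d) ℂ :=
  Matrix.of fun j k => if j = k + 1 then 1 else 0

/-- The modulation matrix `Ω`, `Ω_{jk} = ω^j δ_{jk}`. -/
noncomputable def Omat (d : ℕ) [NeZero d] : Matrix (ZMod d) (ZMod d) ℂ :=
  Matrix.of fun j k => if j = k then omegaRoot d ^ j.val else 0

/-- The reconstruction operator `T`, `Tc = (1/d) Σ_{j,k} c_{jk} (S^j Ω^k)^*`. -/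
noncomputable def Trec (d : ℕ) [NeZero d] (c : Matrix (ZMod d) (ZMod d) ℂ) :
    Matrix (ZMod d) (ZMod d) ℂ :=
  (1 / (d : ℂ)) • ∑ j : ZMod d, ∑ k : ZMod d, c j k • (Smat d ^ j.val * Omat d ^ k.val)ᴴ

/-! Row `0` of `Tc` only sees the row sums of `c`: the `0`-th column of `S^j Ω^k` is the basis
vector `e_j`, since `Ω` fixes `e_0` and `S^j e_0 = e_j`. Comparing with row `0` of `vv*` and
conjugating gives the formula. -/

lemma Omat_eq_diagonal (d : ℕ) [NeZero d] :
    Omat d = diagonal fun j : ZMod d => omegaRoot d ^ j.val := by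
  ext j k
  simp [Omat, diagonal_apply]

lemma Smat_pow_apply (d : ℕ) [NeZero d] (m : ℕ) (x y : ZMod d) :
    (Smat d ^ m) x y = if x = y + (m : ZMod d) then 1 else 0 := by
  induction m generalizing x y with
  | zero => simp [one_apply]
  | succ m ih =>
    rw [pow_succ, mul_apply]
    simp only [ih]
    simp only [Smat, of_apply, mul_ite, mul_one, mul_zero, Finset.sum_ite_eq',
      Finset.mem_univ, if_true]
    push_cast
    ring_nf

lemma Smat_pow_mul_Omat_pow_apply_zero (d : ℕ) [NeZero d] (j k b : ZMod d) :
    (Smat d ^ j.val * Omat d ^ k.val) b 0 = if b = j then 1 else 0 := by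
  rw [Omat_eq_diagonal, diagonal_pow, mul_diagonal, Smat_pow_apply]
  simp

lemma Trec_apply_zero_left (d : ℕ) [NeZero d] (c : Matrix (ZMod d) (ZMod d) ℂ) (b : ZMod d) :
    Trec d c 0 b = (1 / (d : ℂ)) * ∑ k, c b k := by
  simp only [Trec, Matrix.smul_apply, Matrix.sum_apply, smul_eq_mul, conjTranspose_apply,
    Smat_pow_mul_Omat_pow_apply_zero, apply_ite star, star_one, star_zero, mul_ite, mul_one,
    mul_zero]
  rw [Finset.sum_comm]
  simp

theorem stmt3_general (d : ℕ) [NeZero d] (c : Matrix (ZMod d) (ZMod d) ℂ)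
    (v : ZMod d → ℂ) (hTc : Trec d c = Matrix.vecMulVec v (star v)) (hv0 : v 0 ≠ 0) :
    v = (1 / ((d : ℂ) * (starRingEnd ℂ) (v 0))) • ((c.map (starRingEnd ℂ)) *ᵥ fun _ => 1) ∧
    ∀ j : ZMod d, (d : ℂ) * (starRingEnd ℂ) (v 0) * v j = ∑ k : ZMod d, (starRingEnd ℂ) (c j k) := by
  have hd : (d : ℂ) ≠ 0 := Nat.cast_ne_zero.mpr (NeZero.ne d)
  have hscale : (d : ℂ) * (starRingEnd ℂ) (v 0) ≠ 0 := mul_ne_zero hd (by simpa using hv0)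
  have hentry (j : ZMod d) :
      (d : ℂ) * (starRingEnd ℂ) (v 0) * v j = ∑ k, (starRingEnd ℂ) (c j k) := by
    have hrow : v 0 * (starRingEnd ℂ) (v j) = (1 / (d : ℂ)) * ∑ k, c j k := by
      rw [← Trec_apply_zero_left, hTc, vecMulVec_apply]
      rfl
    have hrow_conj := congrArg (starRingEnd ℂ) hrow
    simp only [map_mul, map_sum, conj_conj, map_div₀, map_one, conj_natCast] at hrow_conj
    rw [mul_assoc, hrow_conj, ← mul_assoc, mul_one_div_cancel hd, one_mul]
  refine ⟨funext fun j => ?_, hentry⟩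
  simp only [Pi.smul_apply, mulVec, dotProduct, map_apply, mul_one, smul_eq_mul, ← hentry j]
  rw [one_div, inv_mul_cancel_left₀ hscale]

theorem stmt3 (d : ℕ) [NeZero d] (hd : 2 ≤ d) (c : Matrix (ZMod d) (ZMod d) ℂ)
    (v : ZMod d → ℂ) (hTc : Trec d c = Matrix.vecMulVec v (star v)) (hv0 : v 0 ≠ 0) :
    v = (1 / ((d : ℂ) * (starRingEnd ℂ) (v 0))) • ((c.map (starRingEnd ℂ)) *ᵥ fun _ => 1) ∧
    ∀ j : ZMod d, (d : ℂ) * (starRingEnd ℂ) (v 0) * v j = ∑ k : ZMod d, (starRingEnd ℂ) (c j k) :=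
  stmt3_general d c v hTc hv0
end

section
/- For every c ∈ ℂ^{ℤ_d×ℤ_d}, (√d·L)⁴ c = (F* R^{−2} F)·c, where the right-hand side is the matrix product of the d×d matrix F*R^{−2}F with the d×d matrix c. -/
open Matrix Complex

/-- `μ = exp(2πi/(2d))`. -/
noncomputable def muRoot (d : ℕ) : ℂ := Complex.exp (2 * Real.pi * Complex.I / (2 * d))

/-- The Fourier matrix `F`, `F_{jk} = ω^{jk}/√d`. -/
noncomputable def Fmat (d : ℕ) [NeZero d] : Matrix (ZMod d) (ZMod d) ℂ :=
  Matrix.of fun j k => omegaRoot d ^ (j.val * k.val) / (Real.sqrt d : ℂ)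

/-- The diagonal matrix `R`, `R_{jj} = μ^{j(j+d)}`. -/
noncomputable def Rmat (d : ℕ) [NeZero d] : Matrix (ZMod d) (ZMod d) ℂ :=
  Matrix.of fun j k => if j = k then muRoot d ^ (j.val * (j.val + d)) else 0

/-- The operator `L`, `Lc = (1/d) Σ_{j,k} c_{jk} S^{-j} Ω^{-k}`. -/
noncomputable def Lop (d : ℕ) [NeZero d] (c : Matrix (ZMod d) (ZMod d) ℂ) :
    Matrix (ZMod d) (ZMod d) ℂ :=
  (1 / (d : ℂ)) • ∑ j : ZMod d, ∑ k : ZMod d, c j k • ((Smat d ^ j.val)⁻¹ * (Omat d ^ k.val)⁻¹)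

/-!
Write `𝕖 x = ω ^ x.val` for the standard additive character of `ZMod d`. Then
`(√d L c) a b = d^{-1/2} ∑ₖ 𝕖(-b k) c (b - a) k`, and `(√d L)²` is an integral operator with kernel
`d⁻¹ 𝕖((p + b - a) l)` (after reindexing). Composing it with itself, the sum over the middle row index
is a character sum `∑ₚ 𝕖(p (l - m)) = d δₗₘ`; this removes every dependence on the column index and
leaves left multiplication by the matrix with entries `d⁻¹ ∑ⱼ 𝕖(j (q - a - j))`, which is `F* R⁻² F`
because `R² = diag 𝕖(j²)` (as `μ² = ω`).
-/

open Finset ZMod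

local notation "𝕖" => stdAddChar

lemma Matrix.inv_diagonal_addChar_comp {n A R : Type*} [Fintype n] [DecidableEq n]
    [AddCommGroup A] [CommRing R] (ψ : AddChar A R) (f : n → A) :
    (diagonal fun i => ψ (f i))⁻¹ = diagonal fun i => ψ (-f i) := by
  refine inv_eq_right_inv ?_
  simp [diagonal_mul_diagonal, ← AddChar.map_add_eq_mul]

lemma ofReal_sqrt_natCast_mul_self {d : ℕ} :
    ((Real.sqrt d : ℝ) : ℂ) * ((Real.sqrt d : ℝ) : ℂ) = d := by
  rw [← Complex.ofReal_mul, Real.mul_self_sqrt (Nat.cast_nonneg d), Complex.ofReal_natCast]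

section
variable {d : ℕ} [NeZero d]

lemma omegaRoot_pow (n : ℕ) : omegaRoot d ^ n = 𝕖 (n : ZMod d) := by
  rw [omegaRoot, ← Complex.exp_nat_mul, stdAddChar_apply, toCircle_natCast]
  congr 1
  ring

lemma omegaRoot_pow_val (j : ZMod d) : omegaRoot d ^ j.val = 𝕖 j := by
  rw [omegaRoot_pow, natCast_zmod_val]

lemma omegaRoot_pow_val_mul_val (j k : ZMod d) : omegaRoot d ^ (j.val * k.val) = 𝕖 (j * k) := by
  rw [omegaRoot_pow, Nat.cast_mul, natCast_zmod_val, natCast_zmod_val]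

lemma muRoot_sq : muRoot d ^ 2 = omegaRoot d := by
  have hd : (d : ℂ) ≠ 0 := NeZero.ne _
  rw [muRoot, ← Complex.exp_nat_mul, omegaRoot]
  congr 1
  field_simp
  norm_num

lemma Smat_pow (m : ℕ) :
    Smat d ^ m = of fun j k => if j = k + (m : ZMod d) then 1 else 0 := by
  induction m with
  | zero => ext j k; simp [one_apply]
  | succ n ih =>
    ext j k
    rw [pow_succ, ih, mul_apply, sum_eq_single (k + 1)]
    · simp [Smat, add_assoc, add_comm (1 : ZMod d)]
    · intro b _ hb
      simp [Smat, hb]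
    · simp

lemma inv_Smat_pow (m : ℕ) :
    (Smat d ^ m)⁻¹ = of fun j k => if k = j + (m : ZMod d) then 1 else 0 := by
  refine inv_eq_left_inv ?_
  ext j k
  rw [Smat_pow, mul_apply, sum_eq_single (j + (m : ZMod d))]
  · simp [one_apply]
  · intro b _ hb
    simp [hb]
  · simp

lemma inv_Omat_pow (m : ℕ) :
    (Omat d ^ m)⁻¹ = diagonal fun j => 𝕖 (-(j * (m : ZMod d))) := by
  have hΩ : Omat d ^ m = diagonal fun j => 𝕖 (j * (m : ZMod d)) := by
    rw [show Omat d = diagonal 𝕖 by ext j k; by_cases h : j = k <;> simp [Omat, h, omegaRoot_pow_val],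
      diagonal_pow]
    congr 1
    ext j
    simp [← AddChar.map_nsmul_eq_pow, mul_comm]
  rw [hΩ, inv_diagonal_addChar_comp]

lemma Rmat_sq : Rmat d ^ 2 = diagonal fun j => 𝕖 (j * j) := by
  have hR : Rmat d = diagonal fun j => muRoot d ^ (j.val * (j.val + d)) := by
    ext j k
    by_cases h : j = k <;> simp [Rmat, h]
  rw [hR, diagonal_pow]
  congr 1
  ext j
  rw [Pi.pow_apply, ← pow_mul, mul_comm _ 2, pow_mul, muRoot_sq, mul_add, pow_add,
    omegaRoot_pow_val_mul_val, omegaRoot_pow]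
  simp

lemma Fmat_eq : Fmat d = of fun j k => 𝕖 (j * k) / (Real.sqrt d : ℂ) := by
  ext j k
  simp [Fmat, omegaRoot_pow_val_mul_val]

lemma Lop_apply (c : Matrix (ZMod d) (ZMod d) ℂ) (a b : ZMod d) :
    Lop d c a b = (d : ℂ)⁻¹ * ∑ k, 𝕖 (-(b * k)) * c (b - a) k := by
  have hentry (j k : ZMod d) : ((Smat d ^ j.val)⁻¹ * (Omat d ^ k.val)⁻¹) a b
      = if j = b - a then 𝕖 (-(b * k)) else 0 := by
    rw [inv_Smat_pow, inv_Omat_pow, mul_diagonal]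
    simp [eq_sub_iff_add_eq, add_comm j, eq_comm]
  simp only [Lop, Matrix.smul_apply, Matrix.sum_apply, hentry, smul_eq_mul, mul_ite, mul_zero]
  rw [sum_comm]
  simp [mul_comm]

variable (d) in
noncomputable def scaledLop (c : Matrix (ZMod d) (ZMod d) ℂ) : Matrix (ZMod d) (ZMod d) ℂ :=
  ((Real.sqrt d : ℝ) : ℂ) • Lop d c

lemma scaledLop_apply (c : Matrix (ZMod d) (ZMod d) ℂ) (a b : ZMod d) :
    scaledLop d c a b = ((Real.sqrt d : ℝ) : ℂ)⁻¹ * ∑ k, 𝕖 (-(b * k)) * c (b - a) k := by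
  have hs : ((Real.sqrt d : ℝ) : ℂ) ≠ 0 := by simp [NeZero.ne d]
  rw [scaledLop, Matrix.smul_apply, Lop_apply, smul_eq_mul, ← mul_assoc,
    ← ofReal_sqrt_natCast_mul_self]
  field_simp

lemma scaledLop_scaledLop_apply (c : Matrix (ZMod d) (ZMod d) ℂ) (a b : ZMod d) :
    scaledLop d (scaledLop d c) a b
      = (d : ℂ)⁻¹ * ∑ p, ∑ l, 𝕖 ((p + b - a) * l) * c p (-(b + l)) := by
  simp only [scaledLop_apply, mul_sum, ← mul_assoc, ← ofReal_sqrt_natCast_mul_self, mul_inv]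
  rw [← Equiv.sum_comp (Equiv.addRight (b - a))]
  refine sum_congr rfl fun p _ => ?_
  rw [← Equiv.sum_comp ((Equiv.neg _).trans (Equiv.subRight b))]
  refine sum_congr rfl fun l _ => ?_
  simp only [Equiv.coe_addRight, Equiv.subRight_apply, Equiv.trans_apply, Equiv.neg_apply,
    add_sub_cancel_right, neg_sub_left]
  rw [show (p + b - a) * l = -(b * (p + (b - a))) + -((p + (b - a)) * -(b + l)) by ring,
    AddChar.map_add_eq_mul]
  ring

lemma sum_stdAddChar_mul (t : ZMod d) : ∑ p : ZMod d, 𝕖 (p * t) = if t = 0 then (d : ℂ) else 0 := by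
  rw [AddChar.sum_mulShift _ (isPrimitive_stdAddChar d), ZMod.card, Nat.cast_ite, Nat.cast_zero]

lemma scaledLop_iterate_four_apply (c : Matrix (ZMod d) (ZMod d) ℂ) (a b : ZMod d) :
    (scaledLop d)^[4] c a b = ∑ q, ((d : ℂ)⁻¹ * ∑ j, 𝕖 (j * (q - a - j))) * c q b := by
  have hd : (d : ℂ) ≠ 0 := NeZero.ne _
  change scaledLop d (scaledLop d (scaledLop d (scaledLop d c))) a b = _
  simp only [scaledLop_scaledLop_apply]
  calc (d : ℂ)⁻¹ * ∑ p, ∑ l, 𝕖 ((p + b - a) * l) *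
        ((d : ℂ)⁻¹ * ∑ q, ∑ m, 𝕖 ((q + -(b + l) - p) * m) * c q (-(-(b + l) + m)))
      = (d : ℂ)⁻¹ * (d : ℂ)⁻¹ * ∑ p, ∑ l, ∑ q, ∑ m,
          𝕖 (p * (l - m)) * (𝕖 ((b - a) * l + (q - b - l) * m) * c q (l + b - m)) := by
        simp only [mul_sum]
        refine sum_congr rfl fun p _ => sum_congr rfl fun l _ =>
          sum_congr rfl fun q _ => sum_congr rfl fun m _ => ?_
        have hexp : 𝕖 (p * (l - m)) * 𝕖 ((b - a) * l + (q - b - l) * m)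
            = 𝕖 ((p + b - a) * l) * 𝕖 ((q + -(b + l) - p) * m) := by
          simp only [← AddChar.map_add_eq_mul]
          ring_nf
        rw [show l + b - m = -(-(b + l) + m) by ring]
        linear_combination (-((d : ℂ)⁻¹ * (d : ℂ)⁻¹ * c q (-(-(b + l) + m)))) * hexp
    _ = (d : ℂ)⁻¹ * (d : ℂ)⁻¹ * ∑ l, ∑ q, ∑ m, (∑ p, 𝕖 (p * (l - m))) *
          (𝕖 ((b - a) * l + (q - b - l) * m) * c q (l + b - m)) := by
        simp only [sum_mul]
        congr 1
        rw [sum_comm]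
        exact sum_congr rfl fun l _ => sum_comm.trans (sum_congr rfl fun q _ => sum_comm)
    _ = (d : ℂ)⁻¹ * ∑ l, ∑ q, 𝕖 (l * (q - a - l)) * c q b := by
        simp only [sum_stdAddChar_mul, sub_eq_zero, ite_mul, zero_mul, sum_ite_eq, mem_univ,
          if_true, mul_sum]
        refine sum_congr rfl fun l _ => sum_congr rfl fun q _ => ?_
        rw [add_sub_cancel_left, show (b - a) * l + (q - b - l) * l = l * (q - a - l) by ring]
        field_simp
    _ = ∑ q, ((d : ℂ)⁻¹ * ∑ j, 𝕖 (j * (q - a - j))) * c q b := by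
        rw [sum_comm]
        simp only [mul_sum, sum_mul, mul_assoc]

lemma conjTranspose_Fmat_mul_diagonal_mul_Fmat_apply (v : ZMod d → ℂ) (a q : ZMod d) :
    ((Fmat d)ᴴ * diagonal v * Fmat d) a q = (d : ℂ)⁻¹ * ∑ j, 𝕖 (j * (q - a)) * v j := by
  rw [mul_apply]
  simp only [mul_diagonal, conjTranspose_apply, Fmat_eq, of_apply, star_div₀,
    Complex.star_def, ← AddChar.map_neg_eq_conj, Complex.conj_ofReal, mul_sum]
  refine sum_congr rfl fun j _ => ?_
  rw [mul_sub, sub_eq_neg_add, AddChar.map_add_eq_mul, ← ofReal_sqrt_natCast_mul_self]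
  ring

end

theorem stmt10_general (d : ℕ) [NeZero d] (c : Matrix (ZMod d) (ZMod d) ℂ) :
    (fun a => ((Real.sqrt d : ℝ) : ℂ) • Lop d a)^[4] c
      = (Fmat d)ᴴ * (Rmat d ^ 2)⁻¹ * Fmat d * c := by
  ext a b
  rw [Rmat_sq, inv_diagonal_addChar_comp, mul_apply]
  refine (scaledLop_iterate_four_apply c a b).trans (sum_congr rfl fun q _ => ?_)
  rw [conjTranspose_Fmat_mul_diagonal_mul_Fmat_apply]
  congr 2
  exact sum_congr rfl fun j _ => by rw [← AddChar.map_add_eq_mul]; ring_nf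

theorem stmt10 (d : ℕ) [NeZero d] (hd : 2 ≤ d) (c : Matrix (ZMod d) (ZMod d) ℂ) :
    (fun a => ((Real.sqrt d : ℝ) : ℂ) • Lop d a)^[4] c
      = (Fmat d)ᴴ * (Rmat d ^ 2)⁻¹ * Fmat d * c :=
  stmt10_general d c
end
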